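/- arXiv:1711.05110 — 7 statements merged into one kernel-verified Lean document; each statement's English description precedes it below -/
import Mathlib

section
/- Let λ be a nonreal complex number and q(t) = (t-λ)(t-conj(λ)). Then there exists a polynomial p with real coefficients such that all coefficients of p are nonnegative with positive constant term, and all coefficients of the product p·q are nonnegative with positive constant term. -/
/-!
Squaring `w = R + iI` with `R² > I²` at least doubles `|I| / |R|` (the absolute tangent of the
argument), while keeping it below `1`. Since `Im λ ≠ 0`, the powers `λ^{2^j}` therefore cannot
all have positive real part; let `m` be the first index with `Re(λ^{2^m}) ≤ 0`. Then
`p = ∏_{j<m} (t^{2^j} + λ^{2^j})(t^{2^j} + conj λ^{2^j})` has nonnegative real coefficients, and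
`p q` telescopes to `(t^{2^m} - λ^{2^m})(t^{2^m} - conj λ^{2^m})
= t^{2^{m+1}} - 2 Re(λ^{2^m}) t^{2^m} + |λ|^{2^{m+1}}`.
-/

open Polynomial

/-- The quadratic `q(t) = (t - λ)(t - conj λ)`. -/
noncomputable def quadOf (lam : ℂ) : Polynomial ℂ :=
  (X - C lam) * (X - C (starRingEnd ℂ lam))

open ComplexConjugate

namespace Complex

noncomputable def absTanArg (z : ℂ) : ℝ := |z.im| / |z.re|

lemma abs_im_lt_abs_re_of_re_sq_pos {z : ℂ} (hz : 0 < (z ^ 2).re) : |z.im| < |z.re| := by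
  rw [← sq_lt_sq]
  simpa [sq, mul_re] using hz

lemma absTanArg_lt_one {z : ℂ} (hz : 0 < (z ^ 2).re) : absTanArg z < 1 := by
  have hlt := abs_im_lt_abs_re_of_re_sq_pos hz
  exact (div_lt_one ((abs_nonneg _).trans_lt hlt)).mpr hlt

lemma two_mul_absTanArg_le {z : ℂ} (hz : 0 < (z ^ 2).re) :
    2 * absTanArg z ≤ absTanArg (z ^ 2) := by
  have hre : (z ^ 2).re = z.re ^ 2 - z.im ^ 2 := by simp [sq, mul_re]
  have him : |(z ^ 2).im| = 2 * |z.re| * |z.im| := by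
    simp [sq, mul_im, ← two_mul, mul_comm z.im, abs_mul, mul_assoc]
  calc 2 * absTanArg z = 2 * |z.re| * |z.im| / z.re ^ 2 := by
        rw [absTanArg, ← sq_abs z.re]; field_simp
    _ ≤ 2 * |z.re| * |z.im| / (z ^ 2).re :=
        div_le_div_of_nonneg_left (by positivity) hz (by rw [hre]; nlinarith [sq_nonneg z.im])
    _ = absTanArg (z ^ 2) := by rw [absTanArg, him, abs_of_pos hz]

lemma exists_re_pow_two_pow_nonpos {z : ℂ} (hz : z.im ≠ 0) :
    ∃ m : ℕ, (z ^ 2 ^ m).re ≤ 0 := by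
  by_contra! hpos
  have hsq : ∀ m : ℕ, 0 < ((z ^ 2 ^ m) ^ 2).re := fun m => by
    rw [← pow_mul, ← pow_succ]; exact hpos (m + 1)
  have hgrowth : ∀ m : ℕ, 2 ^ m * absTanArg z ≤ absTanArg (z ^ 2 ^ m) := by
    intro m
    induction m with
    | zero => simp
    | succ m ih =>
      calc 2 ^ (m + 1) * absTanArg z = 2 * (2 ^ m * absTanArg z) := by ring
        _ ≤ 2 * absTanArg (z ^ 2 ^ m) := by gcongr
        _ ≤ absTanArg ((z ^ 2 ^ m) ^ 2) := two_mul_absTanArg_le (hsq m)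
        _ = absTanArg (z ^ 2 ^ (m + 1)) := by rw [← pow_mul, ← pow_succ]
  have htan : 0 < absTanArg z := by
    have hre : z.re ≠ 0 := by simpa using (hpos 0).ne'
    unfold absTanArg; positivity
  obtain ⟨m, hm⟩ := pow_unbounded_of_one_lt (absTanArg z)⁻¹ one_lt_two
  have hlt := (hgrowth m).trans_lt (absTanArg_lt_one (hsq m))
  rw [inv_lt_iff_one_lt_mul₀ htan] at hm
  linarith

end Complex

noncomputable def conjPairPoly (w : ℂ) (k : ℕ) : ℝ[X] :=
  X ^ (2 * k) + C (2 * w.re) * X ^ k + C (Complex.normSq w)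

lemma map_conjPairPoly (w : ℂ) (k : ℕ) :
    (conjPairPoly w k).map (algebraMap ℝ ℂ) = (X ^ k + C w) * (X ^ k + C (conj w)) := by
  have hsum : ((2 * w.re : ℝ) : ℂ) = w + conj w := (Complex.add_conj w).symm
  have hprod : ((Complex.normSq w : ℝ) : ℂ) = w * conj w := (Complex.mul_conj w).symm
  rw [conjPairPoly]
  simp only [Polynomial.map_add, Polynomial.map_mul, Polynomial.map_pow, map_X, map_C,
    Complex.coe_algebraMap]
  rw [hsum, hprod, C_add, C_mul]
  ring

lemma coeff_conjPairPoly_nonneg {w : ℂ} (hw : 0 ≤ w.re) (k n : ℕ) :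
    0 ≤ (conjPairPoly w k).coeff n := by
  simp only [conjPairPoly, coeff_add, coeff_C_mul, coeff_X_pow, coeff_C]
  have := Complex.normSq_nonneg w
  split_ifs <;> positivity

lemma coeff_zero_conjPairPoly (w : ℂ) {k : ℕ} (hk : k ≠ 0) :
    (conjPairPoly w k).coeff 0 = Complex.normSq w := by
  simp [conjPairPoly, coeff_X_pow, hk, hk.symm]

lemma coeff_prod_nonneg {R ι : Type*} [CommSemiring R] [PartialOrder R] [IsOrderedRing R]
    (s : Finset ι) (f : ι → R[X])
    (h : ∀ i ∈ s, ∀ n, 0 ≤ (f i).coeff n) (n : ℕ) : 0 ≤ (∏ i ∈ s, f i).coeff n := by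
  refine Finset.prod_induction f (fun q => ∀ n, 0 ≤ q.coeff n) (fun p q hp hq n => ?_)
    (fun n => ?_) h n
  · rw [coeff_mul]
    exact Finset.sum_nonneg fun x _ => mul_nonneg (hp _) (hq _)
  · rw [coeff_one]
    split_ifs
    exacts [zero_le_one, le_rfl]

lemma map_prod_conjPairPoly_mul_quadOf (z : ℂ) (m : ℕ) :
    (∏ j ∈ Finset.range m, conjPairPoly (z ^ 2 ^ j) (2 ^ j)).map (algebraMap ℝ ℂ) *
        quadOf z =
      (conjPairPoly (-z ^ 2 ^ m) (2 ^ m)).map (algebraMap ℝ ℂ) := by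
  simp only [Polynomial.map_prod, map_conjPairPoly, Finset.prod_mul_distrib, map_neg, map_pow,
    ← sub_eq_add_neg, quadOf]
  rw [pow_two_pow_sub_pow_two_pow m, pow_two_pow_sub_pow_two_pow m]
  ring

theorem stmt0 (lam : ℂ) (hlam : lam.im ≠ 0) :
    ∃ p : Polynomial ℝ,
      (∀ n, 0 ≤ p.coeff n) ∧ 0 < p.coeff 0 ∧
      (∀ n, ((p.map (algebraMap ℝ ℂ) * quadOf lam).coeff n).im = 0 ∧
            0 ≤ ((p.map (algebraMap ℝ ℂ) * quadOf lam).coeff n).re) ∧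
      0 < ((p.map (algebraMap ℝ ℂ) * quadOf lam).coeff 0).re := by
  have hex := Complex.exists_re_pow_two_pow_nonpos hlam
  set m := Nat.find hex
  have hfirst : ∀ j ∈ Finset.range m, 0 ≤ (lam ^ 2 ^ j).re := fun j hj =>
    (not_le.mp (Nat.find_min hex (Finset.mem_range.mp hj))).le
  have hlast : 0 ≤ (-lam ^ 2 ^ m).re := by simpa using Nat.find_spec hex
  have hne : lam ≠ 0 := by rintro rfl; simp at hlam
  refine ⟨∏ j ∈ Finset.range m, conjPairPoly (lam ^ 2 ^ j) (2 ^ j),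
    coeff_prod_nonneg _ _ fun j hj => coeff_conjPairPoly_nonneg (hfirst j hj) _, ?_, ?_, ?_⟩
  · rw [coeff_zero_prod]
    refine Finset.prod_pos fun j _ => ?_
    rw [coeff_zero_conjPairPoly _ (by positivity)]
    exact Complex.normSq_pos.mpr (pow_ne_zero _ hne)
  · intro n
    rw [map_prod_conjPairPoly_mul_quadOf, coeff_map]
    exact ⟨Complex.ofReal_im _, coeff_conjPairPoly_nonneg hlast _ n⟩
  · rw [map_prod_conjPairPoly_mul_quadOf, coeff_map, Complex.coe_algebraMap, Complex.ofReal_re,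
      coeff_zero_conjPairPoly _ (by positivity)]
    exact Complex.normSq_pos.mpr (neg_ne_zero.mpr (pow_ne_zero _ hne))
end

section
/- If q is a polynomial with real coefficients having no real roots and q(0) > 0, then there exists a polynomial p with real coefficients such that p ≻ 0 and p·q ≻ 0. -/
/-!
Over `ℝ`, a polynomial without real roots is a product of a constant and quadratics
`X ^ 2 + b X + c` with `b ^ 2 < 4 c`, and positive multipliers of the factors multiply, so it
suffices to treat one such quadratic with `b < 0`. Multiplying it by `X ^ 2 - b X + c` gives
`X ^ 4 + (2 c - b ^ 2) X ^ 2 + c ^ 2`, a quadratic of the same kind in `X ^ 2`. Writing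
`b = -2 √c cos θ`, this squaring step doubles `θ`; equivalently, as long as the middle coefficient
stays negative, the ratio `(4 c - b ^ 2) / 4 c = sin² θ` at least doubles. Since it is bounded by
`1`, after finitely many steps the middle coefficient is nonnegative.
-/

open Polynomial

namespace Polynomial

section OrderedRing

variable {R : Type*} [CommRing R] [PartialOrder R]

/-- The relation `f ≻ 0`. -/
def CoeffPos (f : R[X]) : Prop := (∀ n, 0 ≤ f.coeff n) ∧ 0 < f.coeff 0

def HasCoeffPosMultiple (q : R[X]) : Prop := ∃ p : R[X], CoeffPos p ∧ CoeffPos (p * q)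

theorem CoeffPos.expand {p : R[X]} (hp : CoeffPos p) {k : ℕ} (hk : 0 < k) :
    CoeffPos (expand R k p) := by
  refine ⟨fun n => ?_, by simpa [coeff_expand hk] using hp.2⟩
  rw [coeff_expand hk]
  split_ifs
  exacts [hp.1 _, le_rfl]

theorem HasCoeffPosMultiple.expand {q : R[X]} (hq : HasCoeffPosMultiple q) {k : ℕ} (hk : 0 < k) :
    HasCoeffPosMultiple (expand R k q) := by
  obtain ⟨p, hp, hpq⟩ := hq
  exact ⟨_, hp.expand hk, by simpa only [map_mul] using hpq.expand hk⟩

theorem coeffPos_C {a : R} (ha : 0 < a) : CoeffPos (C a) :=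
  ⟨fun n => by rw [coeff_C]; split_ifs <;> simp [ha.le], by simpa using ha⟩

variable [IsStrictOrderedRing R]

theorem CoeffPos.mul {p q : R[X]} (hp : CoeffPos p) (hq : CoeffPos q) : CoeffPos (p * q) :=
  ⟨fun n => by
    rw [coeff_mul]
    exact Finset.sum_nonneg fun x _ => mul_nonneg (hp.1 _) (hq.1 _),
   by rw [mul_coeff_zero]; exact mul_pos hp.2 hq.2⟩

theorem coeffPos_X_sq_add_C_mul_X_add_C {b c : R} (hb : 0 ≤ b) (hc : 0 < c) :
    CoeffPos (X ^ 2 + C b * X + C c) := by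
  refine ⟨fun n => ?_, by simpa using hc⟩
  rcases n with _ | _ | _ | n <;> simp [coeff_X, coeff_C, coeff_X_pow, hb, hc.le]

theorem CoeffPos.hasCoeffPosMultiple {q : R[X]} (hq : CoeffPos q) : HasCoeffPosMultiple q :=
  ⟨1, C_1 (R := R) ▸ coeffPos_C one_pos, by rwa [one_mul]⟩

theorem HasCoeffPosMultiple.mul {q r : R[X]} (hq : HasCoeffPosMultiple q)
    (hr : HasCoeffPosMultiple r) : HasCoeffPosMultiple (q * r) := by
  obtain ⟨p, hp, hpq⟩ := hq
  obtain ⟨s, hs, hsr⟩ := hr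
  exact ⟨p * s, hp.mul hs, by simpa only [mul_mul_mul_comm] using hpq.mul hsr⟩

theorem HasCoeffPosMultiple.of_mul_left {s q : R[X]} (hs : CoeffPos s)
    (hsq : HasCoeffPosMultiple (s * q)) : HasCoeffPosMultiple q := by
  obtain ⟨p, hp, hpsq⟩ := hsq
  exact ⟨p * s, hp.mul hs, by rwa [mul_assoc]⟩

end OrderedRing

theorem quadratic_neg_mul_quadratic_eq_expand {R : Type*} [CommRing R] (b c : R) :
    (X ^ 2 + C (-b) * X + C c) * (X ^ 2 + C b * X + C c) =
      expand R 2 (X ^ 2 + C (2 * c - b ^ 2) * X + C (c ^ 2)) := by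
  simp only [map_add, map_mul, map_pow, expand_X, expand_C, map_sub, map_ofNat, map_neg]
  ring

section ArchimedeanField

variable {R : Type*} [Field R] [LinearOrder R] [IsStrictOrderedRing R]

theorem hasCoeffPosMultiple_X_sq_add_C_mul_X_add_C_of_le_two_pow (N : ℕ) {b c : R}
    (hd : b ^ 2 < 4 * c) (hN : 4 * c ≤ 2 ^ N * (4 * c - b ^ 2)) :
    HasCoeffPosMultiple (X ^ 2 + C b * X + C c) := by
  have hc : 0 < c := by nlinarith
  induction N generalizing b c with
  | zero =>
    obtain rfl : b = 0 := by nlinarith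
    exact (coeffPos_X_sq_add_C_mul_X_add_C le_rfl hc).hasCoeffPosMultiple
  | succ N ih =>
    rcases le_or_gt 0 b with hb | hb
    · exact (coeffPos_X_sq_add_C_mul_X_add_C hb hc).hasCoeffPosMultiple
    refine .of_mul_left (coeffPos_X_sq_add_C_mul_X_add_C (neg_nonneg.2 hb.le) hc) ?_
    rw [quadratic_neg_mul_quadratic_eq_expand]
    refine HasCoeffPosMultiple.expand ?_ two_pos
    rcases le_or_gt 0 (2 * c - b ^ 2) with hb' | hb'
    · exact (coeffPos_X_sq_add_C_mul_X_add_C hb' (by positivity)).hasCoeffPosMultiple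
    refine ih (by nlinarith) ?_ (by positivity)
    calc 4 * c ^ 2 = c * (4 * c) := by ring
      _ ≤ c * (2 ^ (N + 1) * (4 * c - b ^ 2)) := mul_le_mul_of_nonneg_left hN hc.le
      _ = 2 ^ N * ((2 * c) * (4 * c - b ^ 2)) := by ring
      _ ≤ 2 ^ N * (b ^ 2 * (4 * c - b ^ 2)) := by gcongr; linarith
      _ = 2 ^ N * (4 * c ^ 2 - (2 * c - b ^ 2) ^ 2) := by ring

theorem hasCoeffPosMultiple_X_sq_add_C_mul_X_add_C [Archimedean R] {b c : R}
    (hd : b ^ 2 < 4 * c) : HasCoeffPosMultiple (X ^ 2 + C b * X + C c) := by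
  obtain ⟨N, hN⟩ := Archimedean.arch (4 * c) (sub_pos.2 hd)
  refine hasCoeffPosMultiple_X_sq_add_C_mul_X_add_C_of_le_two_pow N hd (hN.trans ?_)
  rw [nsmul_eq_mul]
  have : (N : R) ≤ 2 ^ N := by exact_mod_cast Nat.lt_two_pow_self.le
  exact mul_le_mul_of_nonneg_right this (sub_pos.2 hd).le

end ArchimedeanField

theorem exists_quadratic_dvd_of_eval_ne_zero {q : ℝ[X]} (hroots : ∀ x, q.eval x ≠ 0)
    (hdeg : q.natDegree ≠ 0) : ∃ b c : ℝ, b ^ 2 < 4 * c ∧ X ^ 2 + C b * X + C c ∣ q := by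
  obtain ⟨z, hz⟩ := IsAlgClosed.exists_aeval_eq_zero ℂ q
    fun h => hdeg (natDegree_eq_of_degree_eq_some h)
  have him : z.im ≠ 0 := by
    intro h
    have hre : algebraMap ℝ ℂ z.re = z := Complex.ext rfl h.symm
    rw [← hre, aeval_algebraMap_apply_eq_algebraMap_eval, map_eq_zero] at hz
    exact hroots z.re hz
  refine ⟨-(2 * z.re), ‖z‖ ^ 2, ?_, ?_⟩
  · rw [Complex.sq_norm, Complex.normSq_apply]
    nlinarith [mul_self_pos.2 him]
  · simpa [sub_eq_add_neg] using q.quadratic_dvd_of_aeval_eq_zero_im_ne_zero hz him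

theorem hasCoeffPosMultiple_of_eval_ne_zero {q : ℝ[X]} (hroots : ∀ x, q.eval x ≠ 0)
    (hq0 : 0 < q.eval 0) : HasCoeffPosMultiple q := by
  induction hn : q.natDegree using Nat.strong_induction_on generalizing q with
  | _ n ih =>
  rcases eq_or_ne n 0 with rfl | hn0
  · rw [eq_C_of_natDegree_eq_zero hn, coeff_zero_eq_eval_zero]
    exact (coeffPos_C hq0).hasCoeffPosMultiple
  obtain ⟨b, c, hd, r, rfl⟩ := exists_quadratic_dvd_of_eval_ne_zero hroots (hn ▸ hn0)
  have hc : 0 < c := by nlinarith [sq_nonneg b]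
  have hquad_deg : (X ^ 2 + C b * X + C c : ℝ[X]).natDegree = 2 := by compute_degree!
  have hr0 : r ≠ 0 := by rintro rfl; simp at hq0
  refine (hasCoeffPosMultiple_X_sq_add_C_mul_X_add_C hd).mul (ih r.natDegree ?_ ?_ ?_ rfl)
  · rw [← hn, natDegree_mul (ne_zero_of_natDegree_gt (hquad_deg ▸ two_pos)) hr0, hquad_deg]
    omega
  · exact fun x hx => hroots x (by rw [eval_mul, hx, mul_zero])
  · rw [eval_mul] at hq0
    exact pos_of_mul_pos_right hq0 (by simpa using hc.le)

end Polynomial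

theorem stmt1 (q : Polynomial ℝ) (hroots : ∀ x : ℝ, q.eval x ≠ 0)
    (hq0 : 0 < q.eval 0) :
    ∃ p : Polynomial ℝ,
      (∀ n, 0 ≤ p.coeff n) ∧ 0 < p.coeff 0 ∧
      (∀ n, 0 ≤ (p * q).coeff n) ∧ 0 < (p * q).coeff 0 := by
  obtain ⟨p, hp, hpq⟩ := hasCoeffPosMultiple_of_eval_ne_zero hroots hq0
  exact ⟨p, hp.1, hp.2, hpq.1, hpq.2⟩
end

section
/- If q is a polynomial with real coefficients such that q(t) > 0 for every t in [0,1], then there exists a function u analytic on a neighborhood of the closed unit disc such that all Taylor coefficients of u at 0 are nonnegative with u(0) > 0, and all Taylor coefficients of u·q at 0 are nonnegative with (uq)(0) > 0. -/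
/-!
Choose `ρ > 1` with `q > 0` on `[0, ρ]` and take `u(t) = (1 - t/ρ)^(-(N+1))`, whose coefficients
are `C(j+N, N) / ρ^j`. With `p(s) = q(ρ s)`, the `n`-th coefficient of `u q` is `ρ^(-n)` times
`∑ₖ pₖ C(n-k+N, N) = C(n+N, N) ∑ₖ pₖ ∏_{i<k} (n-i)/(n+N-i)`. For `i < d = deg p` each factor is
within `d/(N-d)` of `c = n/(n+N) ∈ [0, 1]`, so the last sum is `p(c) + O(d²/N)`, uniformly in `n`;
since `p` is bounded below by a positive constant on `[0, 1]`, it is nonnegative once `N` is large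
(Pólya's argument).
-/

open Polynomial Finset

theorem norm_prod_range_sub_prod_le {R : Type*} [NormedCommRing R] [NormOneClass R]
    {a b : ℕ → R} {k : ℕ} (ha : ∀ i < k, ‖a i‖ ≤ 1) (hb : ∀ i < k, ‖b i‖ ≤ 1) :
    ‖∏ i ∈ range k, a i - ∏ i ∈ range k, b i‖ ≤ ∑ i ∈ range k, ‖a i - b i‖ := by
  induction k with
  | zero => simp
  | succ k ih =>
    have hprod : ‖∏ i ∈ range k, a i‖ ≤ 1 :=
      (Finset.norm_prod_le _ _).trans (prod_le_one (fun _ _ ↦ norm_nonneg _)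
        fun i hi ↦ ha i (by simp at hi; omega))
    have hbk : ‖b k‖ ≤ 1 := hb k (by omega)
    have ih' := ih (fun i hi ↦ ha i (by omega)) (fun i hi ↦ hb i (by omega))
    rw [prod_range_succ, prod_range_succ, sum_range_succ, show
      (∏ i ∈ range k, a i) * a k - (∏ i ∈ range k, b i) * b k =
        (∏ i ∈ range k, a i) * (a k - b k) + (∏ i ∈ range k, a i - ∏ i ∈ range k, b i) * b k by
      ring]
    calc _ ≤ ‖∏ i ∈ range k, a i‖ * ‖a k - b k‖ +
          ‖∏ i ∈ range k, a i - ∏ i ∈ range k, b i‖ * ‖b k‖ :=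
          (norm_add_le _ _).trans (add_le_add (norm_mul_le _ _) (norm_mul_le _ _))
      _ ≤ 1 * ‖a k - b k‖ + (∑ i ∈ range k, ‖a i - b i‖) * 1 := by gcongr
      _ = _ := by ring

theorem choose_sub_add_eq_mul_prod (n N k : ℕ) (hk : k ≤ n) :
    ((n - k + N).choose N : ℝ) =
      (n + N).choose N * ∏ i ∈ range k, ((n : ℝ) - i) / (n + N - i) := by
  induction k with
  | zero => simp
  | succ k ih =>
    obtain ⟨a, rfl⟩ : ∃ a, n = k + 1 + a := ⟨n - (k + 1), by omega⟩
    have hstep : ((a + N).choose N : ℝ) * (a + N + 1) = (a + N + 1).choose N * (a + 1) := by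
      have := Nat.choose_mul_succ_eq (a + N) N
      rw [show a + N + 1 - N = a + 1 by omega] at this
      exact_mod_cast this
    rw [prod_range_succ, ← mul_assoc, ← ih (by omega),
      show k + 1 + a - (k + 1) + N = a + N by omega, show k + 1 + a - k + N = a + N + 1 by omega]
    have hpos : (0 : ℝ) < a + N + 1 := by positivity
    rw [mul_div_assoc', eq_div_iff (by push_cast; linarith)]
    push_cast
    linear_combination hstep

theorem abs_sub_div_add_sub_le_one (n N i : ℕ) (hi : 2 * i < N) :
    |((n : ℝ) - i) / (n + N - i)| ≤ 1 := by
  have hi' : (2 * i : ℝ) < N := by exact_mod_cast hi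
  have hpos : (0 : ℝ) < n + N - i := by linarith [(n.cast_nonneg : (0 : ℝ) ≤ n)]
  rw [abs_div, abs_of_pos hpos, div_le_one hpos, abs_le]
  constructor <;> linarith [(n.cast_nonneg : (0 : ℝ) ≤ n)]

theorem abs_sub_div_add_sub_sub_div_add_le (n N i : ℕ) (hi : i < N) :
    |((n : ℝ) - i) / (n + N - i) - n / (n + N)| ≤ i / (N - i) := by
  have hn : (0 : ℝ) ≤ n := n.cast_nonneg
  have hi' : (i : ℝ) < N := by exact_mod_cast hi
  have hNi : (0 : ℝ) < N - i := by linarith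
  have hnN : (0 : ℝ) < n + N := by linarith
  have hnNi : (0 : ℝ) < n + N - i := by linarith
  have hdiff : ((n : ℝ) - i) / (n + N - i) - n / (n + N) = -(i * N / ((n + N) * (n + N - i))) := by
    field_simp
    ring
  rw [hdiff, abs_neg, abs_of_nonneg (by positivity), div_le_div_iff₀ (mul_pos hnN hnNi) hNi]
  have : (N : ℝ) * (N - i) ≤ (n + N) * (n + N - i) := by nlinarith
  calc (i : ℝ) * N * (N - i) = i * (N * (N - i)) := by ring
    _ ≤ i * ((n + N) * (n + N - i)) := by gcongr

theorem abs_prod_div_sub_pow_le (n N d k : ℕ) (hk : k ≤ d) (hd : 2 * d < N) :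
    |∏ i ∈ range k, ((n : ℝ) - i) / (n + N - i) - ((n : ℝ) / (n + N)) ^ k|
      ≤ d * (d / (N - d)) := by
  have hc : |(n : ℝ) / (n + N)| ≤ 1 := by simpa using abs_sub_div_add_sub_le_one n N 0 (by omega)
  have hd' : (d : ℝ) < N - d := by
    have : ((2 * d : ℕ) : ℝ) < N := by exact_mod_cast hd
    push_cast at this; linarith
  have hpow : ((n : ℝ) / (n + N)) ^ k = ∏ _i ∈ range k, (n : ℝ) / (n + N) := by
    rw [prod_const, card_range]
  rw [hpow, ← Real.norm_eq_abs]
  refine (norm_prod_range_sub_prod_le (fun i hi ↦ abs_sub_div_add_sub_le_one n N i (by omega))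
    fun _ _ ↦ hc).trans ?_
  calc ∑ i ∈ range k, ‖((n : ℝ) - i) / (n + N - i) - n / (n + N)‖
      ≤ ∑ _i ∈ range k, (d : ℝ) / (N - d) := by
        refine sum_le_sum fun i hi ↦ ?_
        have hid : (i : ℝ) ≤ d := by exact_mod_cast (mem_range.1 hi).le.trans hk
        rw [Real.norm_eq_abs]
        refine (abs_sub_div_add_sub_sub_div_add_le n N i (by simp at hi; omega)).trans ?_
        gcongr
        linarith
    _ = k * (d / (N - d)) := by rw [sum_const, card_range, nsmul_eq_mul]
    _ ≤ d * (d / (N - d)) := by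
        have : (0 : ℝ) ≤ d / (N - d) := div_nonneg d.cast_nonneg (by linarith)
        gcongr

theorem sum_coeff_mul_choose_eq (p : ℝ[X]) (N n : ℕ) :
    ∑ k ∈ range (n + 1), p.coeff k * ((n - k + N).choose N : ℝ) =
      (n + N).choose N *
        ∑ k ∈ range (p.natDegree + 1), p.coeff k * ∏ i ∈ range k, ((n : ℝ) - i) / (n + N - i) := by
  set g : ℕ → ℝ := fun k ↦ p.coeff k * ∏ i ∈ range k, ((n : ℝ) - i) / (n + N - i)
  have hg_of_lt : ∀ k, n < k → g k = 0 := fun k hk ↦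
    mul_eq_zero_of_right _ (prod_eq_zero (mem_range.2 hk) (by simp))
  have hg_of_gt : ∀ k, p.natDegree < k → g k = 0 := fun k hk ↦
    mul_eq_zero_of_left (coeff_eq_zero_of_natDegree_lt hk) _
  have hsub : ∀ b, min n p.natDegree ≤ b →
      ∑ k ∈ range (min n p.natDegree + 1), g k = ∑ k ∈ range (b + 1), g k := fun b hb ↦
    sum_subset (range_subset_range.2 (by omega)) fun k _ hk ↦ by
      rw [mem_range, not_lt] at hk
      rcases lt_or_ge n k with h | h
      · exact hg_of_lt k h
      · exact hg_of_gt k (by omega)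
  calc ∑ k ∈ range (n + 1), p.coeff k * ((n - k + N).choose N : ℝ)
      = ∑ k ∈ range (n + 1), (n + N).choose N * g k :=
        sum_congr rfl fun k hk ↦ by
          rw [choose_sub_add_eq_mul_prod n N k (mem_range_succ_iff.1 hk)]; ring
    _ = (n + N).choose N * ∑ k ∈ range (p.natDegree + 1), g k := by
        rw [← mul_sum, ← hsub n (min_le_left _ _), hsub _ (min_le_right _ _)]

theorem Polynomial.eval_sub_le_sum_coeff_mul (p : ℝ[X]) {x E : ℝ} {r : ℕ → ℝ}
    (hr : ∀ k ≤ p.natDegree, |r k - x ^ k| ≤ E) :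
    p.eval x - (∑ k ∈ range (p.natDegree + 1), |p.coeff k|) * E ≤
      ∑ k ∈ range (p.natDegree + 1), p.coeff k * r k := by
  rw [eval_eq_sum_range, sum_mul, ← sum_sub_distrib]
  refine sum_le_sum fun k hk ↦ ?_
  have hcoeff : p.coeff k * (x ^ k - r k) ≤ |p.coeff k| * E :=
    calc p.coeff k * (x ^ k - r k) ≤ |p.coeff k * (x ^ k - r k)| := le_abs_self _
      _ = |p.coeff k| * |r k - x ^ k| := by rw [abs_mul, abs_sub_comm]
      _ ≤ |p.coeff k| * E := by gcongr; exact hr k (mem_range_succ_iff.1 hk)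
  linarith

theorem Polynomial.exists_forall_sum_coeff_mul_choose_nonneg (p : ℝ[X])
    (hp : ∀ x ∈ Set.Icc (0 : ℝ) 1, 0 < p.eval x) :
    ∃ N : ℕ, ∀ n, 0 ≤ ∑ k ∈ range (n + 1), p.coeff k * ((n - k + N).choose N : ℝ) := by
  obtain ⟨m, hm0, hm⟩ := isCompact_Icc.exists_forall_le' p.continuous.continuousOn hp
  set d := p.natDegree
  set A := ∑ k ∈ range (d + 1), |p.coeff k|
  obtain ⟨M, hM⟩ := exists_nat_ge (A * d * d / m)
  refine ⟨M + 2 * d + 1, fun n ↦ ?_⟩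
  set N := M + 2 * d + 1
  have hA : A * (d * (d / (N - d))) ≤ m := by
    have hNd : (N : ℝ) - d = M + d + 1 := by push_cast [N]; ring
    rw [hNd, ← mul_assoc, ← mul_div_assoc, div_le_iff₀ (by positivity)]
    rw [div_le_iff₀ hm0] at hM
    nlinarith [(d.cast_nonneg : (0 : ℝ) ≤ d)]
  have hc : (n : ℝ) / (n + N) ∈ Set.Icc (0 : ℝ) 1 :=
    ⟨by positivity, div_le_one_of_le₀ (by linarith [(N.cast_nonneg : (0 : ℝ) ≤ N)]) (by positivity)⟩
  rw [sum_coeff_mul_choose_eq]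
  refine mul_nonneg (Nat.cast_nonneg _) ?_
  calc (0 : ℝ) ≤ p.eval ((n : ℝ) / (n + N)) - A * (d * (d / (N - d))) := by
        linarith [hm _ hc]
    _ ≤ _ := p.eval_sub_le_sum_coeff_mul fun k hk ↦ abs_prod_div_sub_pow_le n N d k hk (by omega)

theorem exists_one_lt_forall_Icc_pos {f : ℝ → ℝ} (hf : ContinuousAt f 1)
    (h : ∀ t ∈ Set.Icc (0 : ℝ) 1, 0 < f t) : ∃ ρ, 1 < ρ ∧ ∀ t ∈ Set.Icc (0 : ℝ) ρ, 0 < f t := by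
  obtain ⟨u, hu1, hu⟩ := exists_Ico_subset_of_mem_nhds
    (hf.eventually (lt_mem_nhds (h 1 ⟨zero_le_one, le_rfl⟩))) ⟨2, one_lt_two⟩
  refine ⟨(1 + u) / 2, by linarith, fun t ht ↦ ?_⟩
  rcases le_or_gt t 1 with ht1 | ht1
  · exact h t ⟨ht.1, ht1⟩
  · exact hu ⟨ht1.le, by linarith [ht.2]⟩

theorem sum_choose_div_pow_mul_coeff_eq (q : ℝ[X]) {ρ : ℝ} (hρ : ρ ≠ 0) (N n : ℕ) :
    ∑ j ∈ range (n + 1), ((j + N).choose N / ρ ^ j : ℝ) * q.coeff (n - j) =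
      (∑ k ∈ range (n + 1), (q.comp (C ρ * X)).coeff k * ((n - k + N).choose N : ℝ)) / ρ ^ n := by
  rw [← sum_range_reflect, sum_div]
  refine sum_congr rfl fun k hk ↦ ?_
  have hkn : k ≤ n := mem_range_succ_iff.1 hk
  rw [show n + 1 - 1 - k = n - k by omega, show n - (n - k) = k by omega, comp_C_mul_X_coeff,
    ← pow_sub_mul_pow ρ hkn]
  field_simp

theorem stmt2 (q : Polynomial ℝ) (hq : ∀ t ∈ Set.Icc (0:ℝ) 1, 0 < q.eval t) :
    ∃ (u : ℕ → ℝ) (R : ℝ), 1 < R ∧ Summable (fun n => |u n| * R ^ n) ∧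
      (∀ n, 0 ≤ u n) ∧ 0 < u 0 ∧
      (∀ n, 0 ≤ ∑ j ∈ Finset.range (n + 1), u j * q.coeff (n - j)) ∧
      0 < ∑ j ∈ Finset.range 1, u j * q.coeff (0 - j) := by
  obtain ⟨ρ, hρ, hqρ⟩ := exists_one_lt_forall_Icc_pos q.continuous.continuousAt hq
  have hρ0 : 0 < ρ := zero_lt_one.trans hρ
  obtain ⟨N, hN⟩ := (q.comp (C ρ * X)).exists_forall_sum_coeff_mul_choose_nonneg fun x hx ↦ by
    rw [eval_comp]
    simpa using hqρ (ρ * x) ⟨by nlinarith [hx.1], by nlinarith [hx.2]⟩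
  refine ⟨fun j ↦ (j + N).choose N / ρ ^ j, (1 + ρ) / 2, by linarith, ?_, fun n ↦ by positivity,
    by simp, fun n ↦ ?_, ?_⟩
  · have hr : ‖(1 + ρ) / 2 / ρ‖ < 1 := by
      rw [Real.norm_eq_abs, abs_of_pos (by positivity), div_lt_one hρ0]; linarith
    refine (summable_choose_mul_geometric_of_norm_lt_one N hr).congr fun n ↦ ?_
    rw [abs_of_nonneg (by positivity), div_pow]; ring
  · rw [sum_choose_div_pow_mul_coeff_eq q hρ0.ne']
    exact div_nonneg (hN n) (by positivity)
  · simpa [coeff_zero_eq_eval_zero] using hqρ 0 ⟨le_rfl, hρ0.le⟩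
end

section
/- Let T be an n×n complex matrix that is diagonalizable with all eigenvalues on the unit circle. Then there exists a polynomial p with real coefficients, of the form p(t) = (1-t)·∏_{1≤k<ℓ≤n}(1 - 2Re(λ_k conj(λ_ℓ)) t + t²) where λ_j are the eigenvalues, such that ∑_j p_j T*^j T^j = 0. -/
/-!
Write `T = P D P⁻¹` with `D = diagonal λ`. Then `(Tʲ)ᴴ Tʲ = (P⁻¹)ᴴ (Dʲ)ᴴ (Pᴴ P) Dʲ P⁻¹`, so
`∑ⱼ pⱼ (Tʲ)ᴴ Tʲ = (P⁻¹)ᴴ M P⁻¹` where `M k l = p(conj λₖ λₗ) (Pᴴ P) k l`. Every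
`conj λₖ λₗ` is a root of `p`: for `k = l` it is `|λₖ|² = 1`, a root of `1 - t`, and for `k ≠ l`
it is `w` or `conj w` for `w = λₖ conj λₗ` (up to swapping `k` and `l`), while
`1 - 2 Re(w) t + t² = (t - w)(t - conj w)` because `|w| = 1`.
-/

open Polynomial Finset Matrix ComplexConjugate

namespace Matrix

variable {ι R : Type*} [Fintype ι] [DecidableEq ι]

theorem conjTranspose_pow_mul_pow_of_eq_conj [CommRing R] [StarRing R] {T P D : Matrix ι ι R}
    (hP : IsUnit P) (hT : T = P * D * P⁻¹) (j : ℕ) :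
    (T ^ j)ᴴ * T ^ j = (P⁻¹)ᴴ * ((D ^ j)ᴴ * (Pᴴ * P) * D ^ j) * P⁻¹ := by
  obtain ⟨u, rfl⟩ := hP
  rw [hT, ← coe_units_inv, Units.conj_pow]
  simp only [conjTranspose_mul, Matrix.mul_assoc]

theorem conjTranspose_diagonal_pow_mul_mul_pow_apply [CommSemiring R] [StarRing R] (d : ι → R)
    (M : Matrix ι ι R) (j : ℕ) (k l : ι) :
    ((diagonal d ^ j)ᴴ * M * diagonal d ^ j) k l = (star (d k) * d l) ^ j * M k l := by
  rw [diagonal_pow, diagonal_conjTranspose, mul_diagonal, diagonal_mul]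
  simp only [Pi.star_apply, Pi.pow_apply, star_pow]
  ring

theorem sum_coeff_smul_conjTranspose_diagonal_pow_mul_mul_pow (p : ℝ[X]) (d : ι → ℂ)
    (M : Matrix ι ι ℂ) :
    ∑ j ∈ range (p.natDegree + 1), (p.coeff j : ℂ) • ((diagonal d ^ j)ᴴ * M * diagonal d ^ j) =
      of fun k l => aeval (conj (d k) * d l) p * M k l := by
  ext k l
  simp only [sum_apply, smul_apply, conjTranspose_diagonal_pow_mul_mul_pow_apply, of_apply,
    aeval_eq_sum_range, sum_mul, smul_eq_mul, Complex.real_smul, Complex.star_def]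
  simp only [mul_assoc]

theorem sum_coeff_smul_conjTranspose_pow_mul_pow_eq_zero (p : ℝ[X]) {T P : Matrix ι ι ℂ}
    {d : ι → ℂ} (hP : IsUnit P) (hT : T = P * diagonal d * P⁻¹)
    (hp : ∀ k l, aeval (conj (d k) * d l) p = 0) :
    ∑ j ∈ range (p.natDegree + 1), (p.coeff j : ℂ) • ((T ^ j)ᴴ * T ^ j) = 0 := by
  have hmiddle : (of fun k l => aeval (conj (d k) * d l) p * (Pᴴ * P) k l) = 0 := by
    ext k l
    simp [hp]
  calc ∑ j ∈ range (p.natDegree + 1), (p.coeff j : ℂ) • ((T ^ j)ᴴ * T ^ j)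
      = (P⁻¹)ᴴ * (∑ j ∈ range (p.natDegree + 1),
          (p.coeff j : ℂ) • ((diagonal d ^ j)ᴴ * (Pᴴ * P) * diagonal d ^ j)) * P⁻¹ := by
        simp only [conjTranspose_pow_mul_pow_of_eq_conj hP hT, mul_sum, sum_mul, Matrix.mul_smul,
          Matrix.smul_mul]
    _ = 0 := by
        rw [sum_coeff_smul_conjTranspose_diagonal_pow_mul_mul_pow, hmiddle, Matrix.mul_zero,
          Matrix.zero_mul]

end Matrix

theorem aeval_one_sub_C_two_re_mul_X_add_X_sq {w : ℂ} (hw : ‖w‖ = 1) (z : ℂ) :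
    aeval z (1 - C (2 * w.re) * X + X ^ 2 : ℝ[X]) = (z - w) * (z - conj w) := by
  have hnorm : w * conj w = 1 := by simp [Complex.mul_conj', hw]
  have hre : w + conj w = 2 * w.re := by rw [Complex.add_conj]; push_cast; ring
  simp only [map_add, map_sub, map_one, map_mul, map_pow, aeval_X, aeval_C,
    Complex.coe_algebraMap]
  push_cast
  linear_combination z * hre - hnorm

noncomputable def circleAnnihilator {ι : Type*} [Fintype ι] [LinearOrder ι] (lam : ι → ℂ) :
    ℝ[X] :=
  (1 - X) * ∏ kl ∈ univ.filter (fun kl : ι × ι => kl.1 < kl.2),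
    (1 - C (2 * (lam kl.1 * conj (lam kl.2)).re) * X + X ^ 2)

theorem aeval_conj_mul_circleAnnihilator {ι : Type*} [Fintype ι] [LinearOrder ι] {lam : ι → ℂ}
    (hlam : ∀ j, ‖lam j‖ = 1) (k l : ι) :
    aeval (conj (lam k) * lam l) (circleAnnihilator lam) = 0 := by
  rw [circleAnnihilator, map_mul, map_prod]
  rcases lt_trichotomy k l with hkl | rfl | hlk
  · refine mul_eq_zero_of_right _ (prod_eq_zero (i := (k, l)) (by simpa using hkl) ?_)
    rw [aeval_one_sub_C_two_re_mul_X_add_X_sq (by simp [hlam])]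
    simp
  · exact mul_eq_zero_of_left (by simp [Complex.conj_mul', hlam]) _
  · refine mul_eq_zero_of_right _ (prod_eq_zero (i := (l, k)) (by simpa using hlk) ?_)
    rw [aeval_one_sub_C_two_re_mul_X_add_X_sq (by simp [hlam])]
    simp [mul_comm]

theorem stmt9 {n : ℕ} (T : Matrix (Fin n) (Fin n) ℂ)
    (lam : Fin n → ℂ) (P : Matrix (Fin n) (Fin n) ℂ) (hP : IsUnit P)
    (hdiag : T = P * Matrix.diagonal lam * P⁻¹)
    (hcirc : ∀ j, ‖lam j‖ = 1) :
    ∃ p : Polynomial ℝ,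
      p = (1 - X) * ∏ kl ∈ Finset.univ.filter (fun kl : Fin n × Fin n => kl.1 < kl.2),
            (1 - Polynomial.C (2 * (lam kl.1 * (starRingEnd ℂ) (lam kl.2)).re) * X + X ^ 2) ∧
      ∑ j ∈ Finset.range (p.natDegree + 1),
        ((p.coeff j : ℂ)) • ((T ^ j)ᴴ * T ^ j) = 0 :=
  ⟨circleAnnihilator lam, rfl,
    sum_coeff_smul_conjTranspose_pow_mul_pow_eq_zero _ hP hdiag
      (aeval_conj_mul_circleAnnihilator hcirc)⟩
end

section
/- Let T be a power bounded operator on a Hilbert space H. If there exists an invertible bounded operator W such that WTW^{-1} is a contraction, then any bounded operator D with ‖Dh‖ = ‖D_{WTW^{-1}} W h‖ for all h (where D_S = (I - S*S)^{1/2}) satisfies: there exist constants c, C > 0 such that c‖h‖² ≤ ∑_{n≥0} ‖DT^n h‖² + limsup_n ‖T^n h‖² ≤ C‖h‖² for all h ∈ H. -/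
/-!
Put `S = W T W⁻¹`. The equation for `DS` gives `‖DS x‖² = ‖x‖² - ‖S x‖²`, so `‖Sⁿ x‖²` decreases
to some limit `L` and the defect series telescopes: `∑ ‖DS Sⁿ x‖² = ‖x‖² - L`. Since `Sⁿ W = W Tⁿ`,
the series for `D` and `T` at `h` is the defect series of `S` at `W h`, while `‖Tⁿ h‖²` and
`‖Sⁿ W h‖²` agree up to the factors `‖W‖²` and `‖W⁻¹‖²`, and so do `limsup ‖Tⁿ h‖²` and `L`.
Hence the sum plus the limsup is comparable to `‖W h‖²`, and so to `‖h‖²`.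
-/

open ContinuousLinearMap Filter Topology

theorem hasSum_sub_succ_of_antitone {g : ℕ → ℝ} {L : ℝ} (hg : Antitone g)
    (hL : Tendsto g atTop (𝓝 L)) : HasSum (fun n => g n - g (n + 1)) (g 0 - L) := by
  rw [hasSum_iff_tendsto_nat_of_nonneg fun n => sub_nonneg.2 (hg n.le_succ)]
  simp_rw [Finset.sum_range_sub']
  exact tendsto_const_nhds.sub hL

section Limsup

variable {ι : Type*} {l : Filter ι} [NeBot l] {f g : ι → ℝ} {L : ℝ}

theorem limsup_le_mul_of_le_mul (hg : Tendsto g l (𝓝 L)) (hf : ∀ i, 0 ≤ f i) {b : ℝ}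
    (hfg : ∀ i, f i ≤ b * g i) : limsup f l ≤ b * L := by
  have hbg := hg.const_mul b
  rw [← hbg.limsup_eq]
  exact limsup_le_limsup (.of_forall hfg) (isBoundedUnder_of ⟨0, hf⟩).isCoboundedUnder_le
    hbg.isBoundedUnder_le

theorem le_mul_limsup_of_le_mul (hg : Tendsto g l (𝓝 L)) (hf : IsBoundedUnder (· ≤ ·) l f)
    {a : ℝ} (ha : 0 < a) (hgf : ∀ i, g i ≤ a * f i) : L ≤ a * limsup f l := by
  have hag := hg.const_mul a⁻¹
  rw [← inv_mul_le_iff₀ ha, ← hag.limsup_eq]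
  refine limsup_le_limsup (.of_forall fun i => ?_) hag.isBoundedUnder_ge.isCoboundedUnder_le hf
  exact (inv_mul_le_iff₀ ha).2 (hgf i)

end Limsup

theorem IsSelfAdjoint.norm_sq_apply_of_comp_self_eq {𝕜 E : Type*} [RCLike 𝕜]
    [NormedAddCommGroup E] [InnerProductSpace 𝕜 E] [CompleteSpace E] {S DS : E →L[𝕜] E}
    (hDS : IsSelfAdjoint DS) (hsq : DS ∘L DS = ContinuousLinearMap.id 𝕜 E - adjoint S ∘L S)
    (x : E) :
    ‖DS x‖ ^ 2 = ‖x‖ ^ 2 - ‖S x‖ ^ 2 := by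
  rw [apply_norm_sq_eq_inner_adjoint_left, hDS.adjoint_eq, hsq,
    apply_norm_sq_eq_inner_adjoint_left S, sub_apply, inner_sub_left, map_sub, id_apply,
    inner_self_eq_norm_sq]

section Defect

variable {𝕜 E F : Type*} [NontriviallyNormedField 𝕜] [NormedAddCommGroup E] [NormedSpace 𝕜 E]
  [SeminormedAddCommGroup F] {S : E →L[𝕜] E} {DS : E → F}

theorem exists_tendsto_norm_sq_pow_apply_and_hasSum
    (hDS : ∀ x, ‖DS x‖ ^ 2 = ‖x‖ ^ 2 - ‖S x‖ ^ 2) (x : E) :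
    ∃ L, Tendsto (fun n => ‖(S ^ n) x‖ ^ 2) atTop (𝓝 L) ∧
      HasSum (fun n => ‖DS ((S ^ n) x)‖ ^ 2) (‖x‖ ^ 2 - L) := by
  set g : ℕ → ℝ := fun n => ‖(S ^ n) x‖ ^ 2
  have hstep : ∀ n, ‖DS ((S ^ n) x)‖ ^ 2 = g n - g (n + 1) := fun n => by
    simp only [g, hDS, pow_succ' S n, mul_apply_eq_comp]
  have hg : Antitone g := antitone_nat_of_succ_le fun n => sub_nonneg.1 (hstep n ▸ sq_nonneg _)
  have hL := tendsto_atTop_ciInf hg ⟨0, by rintro _ ⟨n, rfl⟩; positivity⟩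
  refine ⟨_, hL, ?_⟩
  simpa only [hstep, g, pow_zero, one_apply_eq_self] using hasSum_sub_succ_of_antitone hg hL

variable {T W Winv : E →L[𝕜] E}

theorem tsum_add_limsup_bounds_of_semiconjBy
    (hDS : ∀ x, ‖DS x‖ ^ 2 = ‖x‖ ^ 2 - ‖S x‖ ^ 2) (hWT : SemiconjBy W T S)
    (hW : Winv ∘L W = ContinuousLinearMap.id 𝕜 E) {D : E → F} (hD : ∀ x, ‖D x‖ = ‖DS (W x)‖)
    {a b : ℝ} (ha : ‖W‖ ≤ a) (hb : ‖Winv‖ ≤ b) (ha1 : 1 ≤ a) (hb1 : 1 ≤ b) (h : E) :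
    ‖W h‖ ^ 2 ≤ a ^ 2 * ((∑' n : ℕ, ‖D ((T ^ n) h)‖ ^ 2) +
        limsup (fun n : ℕ => ‖(T ^ n) h‖ ^ 2) atTop) ∧
      (∑' n : ℕ, ‖D ((T ^ n) h)‖ ^ 2) + limsup (fun n : ℕ => ‖(T ^ n) h‖ ^ 2) atTop ≤
        b ^ 2 * ‖W h‖ ^ 2 := by
  obtain ⟨L, hL, hsum⟩ := exists_tendsto_norm_sq_pow_apply_and_hasSum hDS (W h)
  have hpow : ∀ n, (S ^ n) (W h) = W ((T ^ n) h) := fun n =>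
    congr($((hWT.pow_right n).eq.symm) h)
  have hWinv : ∀ x, Winv (W x) = x := fun x => congr($hW x)
  have hlow : ∀ n, ‖(S ^ n) (W h)‖ ^ 2 ≤ a ^ 2 * ‖(T ^ n) h‖ ^ 2 := fun n => by
    rw [hpow, ← mul_pow]
    gcongr
    exact (le_opNorm _ _).trans (by gcongr)
  have hup : ∀ n, ‖(T ^ n) h‖ ^ 2 ≤ b ^ 2 * ‖(S ^ n) (W h)‖ ^ 2 := fun n => by
    rw [hpow, ← mul_pow]
    gcongr
    exact (hWinv _ ▸ le_opNorm Winv _).trans (by gcongr)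
  have hls_le := limsup_le_mul_of_le_mul hL (fun _ => sq_nonneg _) hup
  have hle_ls := le_mul_limsup_of_le_mul hL
    ((hL.const_mul _).isBoundedUnder_le.mono_le (.of_forall hup)) (by positivity) hlow
  have hL_le : L ≤ ‖W h‖ ^ 2 := sub_nonneg.1 (hsum.nonneg fun _ => sq_nonneg _)
  have hL0 : 0 ≤ L := ge_of_tendsto' hL fun _ => sq_nonneg _
  simp only [hD, ← hpow, hsum.tsum_eq]
  constructor
  · nlinarith [mul_le_mul_of_nonneg_right (one_le_pow₀ (n := 2) ha1) (sub_nonneg.2 hL_le)]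
  · nlinarith [mul_le_mul_of_nonneg_right (one_le_pow₀ (n := 2) hb1) (sub_nonneg.2 hL_le)]

end Defect

theorem stmt10_general {H : Type*} [NormedAddCommGroup H] [InnerProductSpace ℂ H]
    [CompleteSpace H]
    (T : H →L[ℂ] H)
    (W Winv : H →L[ℂ] H)
    (hW2 : Winv ∘L W = ContinuousLinearMap.id ℂ H)
    (DS : H →L[ℂ] H) (hDSsa : IsSelfAdjoint DS)
    (hDSsq : DS ∘L DS = ContinuousLinearMap.id ℂ H -
      adjoint (W ∘L T ∘L Winv) ∘L (W ∘L T ∘L Winv))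
    (D : H →L[ℂ] H) (hD : ∀ h : H, ‖D h‖ = ‖DS (W h)‖) :
    ∃ c C : ℝ, 0 < c ∧ 0 < C ∧ ∀ h : H,
      c * ‖h‖ ^ 2 ≤ (∑' n : ℕ, ‖D ((T ^ n) h)‖ ^ 2) +
          limsup (fun n : ℕ => ‖(T ^ n) h‖ ^ 2) atTop ∧
      (∑' n : ℕ, ‖D ((T ^ n) h)‖ ^ 2) +
          limsup (fun n : ℕ => ‖(T ^ n) h‖ ^ 2) atTop ≤ C * ‖h‖ ^ 2 := by
  set a := max ‖W‖ 1
  set b := max ‖Winv‖ 1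
  have hWT : SemiconjBy W T (W ∘L T ∘L Winv) := by
    simp only [SemiconjBy, mul_def, comp_assoc, hW2, comp_id]
  refine ⟨(a ^ 2 * b ^ 2)⁻¹, a ^ 2 * b ^ 2, by positivity, by positivity, fun h => ?_⟩
  obtain ⟨hlow, hup⟩ := tsum_add_limsup_bounds_of_semiconjBy
    (hDSsa.norm_sq_apply_of_comp_self_eq hDSsq) hWT hW2 hD (le_max_left _ _) (le_max_left _ _)
    (le_max_right _ _) (le_max_right _ _) h
  have hWh : ‖W h‖ ^ 2 ≤ a ^ 2 * ‖h‖ ^ 2 := by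
    rw [← mul_pow]
    gcongr
    exact (le_opNorm _ _).trans (by gcongr; exact le_max_left _ _)
  have hh : ‖h‖ ^ 2 ≤ b ^ 2 * ‖W h‖ ^ 2 := by
    rw [← mul_pow]
    gcongr
    exact (congr($hW2 h) ▸ le_opNorm Winv (W h)).trans (by gcongr; exact le_max_left _ _)
  constructor
  · rw [inv_mul_le_iff₀ (by positivity)]
    calc ‖h‖ ^ 2 ≤ b ^ 2 * ‖W h‖ ^ 2 := hh
      _ ≤ b ^ 2 * (a ^ 2 * _) := by gcongr
      _ = _ := by ring
  · calc _ ≤ b ^ 2 * ‖W h‖ ^ 2 := hup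
      _ ≤ b ^ 2 * (a ^ 2 * ‖h‖ ^ 2) := by gcongr
      _ = _ := by ring

theorem stmt10 {H : Type*} [NormedAddCommGroup H] [InnerProductSpace ℂ H]
    [CompleteSpace H]
    (T : H →L[ℂ] H) (M : ℝ) (hpb : ∀ n : ℕ, ‖T ^ n‖ ≤ M)
    (W Winv : H →L[ℂ] H)
    (hW1 : W ∘L Winv = ContinuousLinearMap.id ℂ H)
    (hW2 : Winv ∘L W = ContinuousLinearMap.id ℂ H)
    (hcontr : ‖W ∘L T ∘L Winv‖ ≤ 1)
    (DS : H →L[ℂ] H) (hDSsa : IsSelfAdjoint DS)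
    (hDSpos : ∀ h : H, 0 ≤ (inner ℂ (DS h) h : ℂ).re)
    (hDSsq : DS ∘L DS = ContinuousLinearMap.id ℂ H -
      adjoint (W ∘L T ∘L Winv) ∘L (W ∘L T ∘L Winv))
    (D : H →L[ℂ] H) (hD : ∀ h : H, ‖D h‖ = ‖DS (W h)‖) :
    ∃ c C : ℝ, 0 < c ∧ 0 < C ∧ ∀ h : H,
      c * ‖h‖ ^ 2 ≤ (∑' n : ℕ, ‖D ((T ^ n) h)‖ ^ 2) +
          limsup (fun n : ℕ => ‖(T ^ n) h‖ ^ 2) atTop ∧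
      (∑' n : ℕ, ‖D ((T ^ n) h)‖ ^ 2) +
          limsup (fun n : ℕ => ‖(T ^ n) h‖ ^ 2) atTop ≤ C * ‖h‖ ^ 2 :=
  stmt10_general T W Winv hW2 DS hDSsa hDSsq D hD
end

section
/- Let β̃ ∈ ℓ¹ with β̃_0 > 0 and all β̃_n ≥ 0, and set β_n = ∑_{j=0}^n β̃_j. Let T be a power bounded operator, D a bounded operator, and B a bounded operator satisfying ‖Bh‖² - ‖BTh‖² = ∑_{n≥0} β̃_n ‖DT^n h‖² for all h. Then ∑_{n≥0} ‖DT^n h‖² converges, lim_{N→∞} ‖BT^N h‖² exists, and ‖Bh‖² = ∑_{n≥0} β_n ‖DT^n h‖² + lim_{N→∞} ‖BT^N h‖² for every h ∈ H. -/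
/-!
Applying the hypothesis to `T^k h` shows that `f k = ‖B T^k h‖²` decreases by
`g k = ∑ₙ β̃ₙ ‖D T^{n+k} h‖²` at each step, so `f` converges and `∑ₖ g k = f 0 - lim f`.
Regrouping the double series `∑ₖ ∑ₙ β̃ₙ ‖D T^{n+k} h‖²` along the antidiagonals `n + k = m`
turns it into `∑ₘ βₘ ‖D T^m h‖²`; since `βₘ ≥ β̃₀ > 0`, this also gives summability of
`‖D T^m h‖²`.
-/

open Filter Finset Topology

theorem HasSum.sum_antidiagonal {α A : Type*} [AddCommMonoid α] [TopologicalSpace α]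
    [ContinuousAdd α] [RegularSpace α] [AddCommMonoid A] [HasAntidiagonal A]
    {F : A × A → α} {s : α} (h : HasSum F s) :
    HasSum (fun n => ∑ p ∈ antidiagonal n, F p) s :=
  (HasAntidiagonal.sigmaAntidiagonalEquivProd.hasSum_iff.mpr h).sigma
    fun n => (antidiagonal n).hasSum F

theorem Antitone.hasSum_sub_succ {f : ℕ → ℝ} (hf : Antitone f) {l : ℝ}
    (hl : Tendsto f atTop (𝓝 l)) : HasSum (fun k => f k - f (k + 1)) (f 0 - l) := by
  rw [hasSum_iff_tendsto_nat_of_nonneg fun k => sub_nonneg.2 (hf k.le_succ)]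
  simp_rw [sum_range_sub']
  exact tendsto_const_nhds.sub hl

theorem hasSum_partialSum_mul_of_hasSum_tsum_mul_shift {β a : ℕ → ℝ} {s : ℝ}
    (hβ : 0 ≤ β) (ha : 0 ≤ a) (hrow : ∀ k, Summable fun n => β n * a (n + k))
    (hs : HasSum (fun k => ∑' n, β n * a (n + k)) s) :
    HasSum (fun m => (∑ j ∈ range (m + 1), β j) * a m) s := by
  set F : ℕ × ℕ → ℝ := fun p => β p.2 * a (p.2 + p.1)
  have hF : Summable F :=
    (summable_prod_of_nonneg fun p => mul_nonneg (hβ _) (ha _)).2 ⟨hrow, hs.summable⟩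
  have hFs : HasSum F s :=
    hs.unique (hF.hasSum.prod_fiberwise fun k => (hrow k).hasSum) ▸ hF.hasSum
  convert hFs.sum_antidiagonal using 2 with m
  rw [← Finset.Nat.sum_antidiagonal_swap, sum_mul]
  refine (Finset.Nat.sum_antidiagonal_eq_sum_range_succ (fun n _ => β n * a m) m).symm.trans ?_
  refine sum_congr rfl fun p hp => ?_
  rw [← HasAntidiagonal.mem_antidiagonal.1 hp]
  rfl

theorem exists_tendsto_of_sub_succ_eq_tsum_mul_shift {β a f : ℕ → ℝ} (hβ : Summable β)
    (hβ0 : 0 < β 0) (hβ_nn : 0 ≤ β) (ha : 0 ≤ a) (ha_bdd : BddAbove (Set.range a))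
    (hf_nn : 0 ≤ f) (hf : ∀ k, f k - f (k + 1) = ∑' n, β n * a (n + k)) :
    Summable a ∧ ∃ l, Tendsto f atTop (𝓝 l) ∧
      f 0 = ∑' m, (∑ j ∈ range (m + 1), β j) * a m + l := by
  obtain ⟨C, hC⟩ := ha_bdd
  have hrow : ∀ k, Summable fun n => β n * a (n + k) := fun k =>
    (hβ.mul_right C).of_nonneg_of_le (fun n => mul_nonneg (hβ_nn n) (ha _))
      fun n => mul_le_mul_of_nonneg_left (hC ⟨_, rfl⟩) (hβ_nn n)
  have hanti : Antitone f := antitone_nat_of_succ_le fun k =>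
    sub_nonneg.1 <| (hf k).symm ▸ tsum_nonneg fun n => mul_nonneg (hβ_nn n) (ha _)
  obtain ⟨l, hl⟩ : ∃ l, Tendsto f atTop (𝓝 l) :=
    ⟨_, tendsto_atTop_ciInf hanti ⟨0, by rintro _ ⟨k, rfl⟩; exact hf_nn k⟩⟩
  have hsum : HasSum (fun m => (∑ j ∈ range (m + 1), β j) * a m) (f 0 - l) :=
    hasSum_partialSum_mul_of_hasSum_tsum_mul_shift hβ_nn ha hrow
      (by simpa only [hf] using hanti.hasSum_sub_succ hl)
  refine ⟨?_, l, hl, by linarith [hsum.tsum_eq]⟩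
  have h0 : Summable fun m => β 0 * a m :=
    hsum.summable.of_nonneg_of_le (fun m => mul_nonneg (hβ_nn 0) (ha m)) fun m =>
      mul_le_mul_of_nonneg_right
        (single_le_sum (fun j _ => hβ_nn j) (mem_range.2 m.succ_pos)) (ha m)
  exact (summable_mul_left_iff hβ0.ne').1 h0

theorem stmt13_general {H : Type*} [NormedAddCommGroup H] [InnerProductSpace ℂ H]
    (bt : ℕ → ℝ) (hbt_sum : Summable bt) (hbt0 : 0 < bt 0) (hbt_nn : ∀ n, 0 ≤ bt n)
    (T : H →L[ℂ] H) (M : ℝ) (hpb : ∀ n : ℕ, ‖T ^ n‖ ≤ M)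
    (D B : H →L[ℂ] H)
    (hB : ∀ h : H, ‖B h‖ ^ 2 - ‖B (T h)‖ ^ 2 = ∑' n : ℕ, bt n * ‖D ((T ^ n) h)‖ ^ 2) :
    ∀ h : H,
      (Summable fun n : ℕ => ‖D ((T ^ n) h)‖ ^ 2) ∧
      ∃ l : ℝ, Tendsto (fun N : ℕ => ‖B ((T ^ N) h)‖ ^ 2) atTop (nhds l) ∧
        ‖B h‖ ^ 2 =
          (∑' n : ℕ, (∑ j ∈ Finset.range (n + 1), bt j) * ‖D ((T ^ n) h)‖ ^ 2) + l := by
  intro h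
  have hbdd : BddAbove (Set.range fun n => ‖D ((T ^ n) h)‖ ^ 2) := by
    refine ⟨(‖D‖ * (M * ‖h‖)) ^ 2, ?_⟩
    rintro _ ⟨n, rfl⟩
    dsimp only
    gcongr
    exact D.le_opNorm_of_le ((T ^ n).le_of_opNorm_le (hpb n) h)
  have hstep : ∀ k, ‖B ((T ^ k) h)‖ ^ 2 - ‖B ((T ^ (k + 1)) h)‖ ^ 2 =
      ∑' n, bt n * ‖D ((T ^ (n + k)) h)‖ ^ 2 := fun k => by
    rw [pow_succ' T k, mul_apply_eq_comp]
    simp_rw [pow_add, mul_apply_eq_comp]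
    exact hB _
  simpa using exists_tendsto_of_sub_succ_eq_tsum_mul_shift hbt_sum hbt0 hbt_nn
    (fun n => sq_nonneg _) hbdd (fun k => sq_nonneg _) hstep

theorem stmt13 {H : Type*} [NormedAddCommGroup H] [InnerProductSpace ℂ H]
    [CompleteSpace H]
    (bt : ℕ → ℝ) (hbt_sum : Summable bt) (hbt0 : 0 < bt 0) (hbt_nn : ∀ n, 0 ≤ bt n)
    (T : H →L[ℂ] H) (M : ℝ) (hpb : ∀ n : ℕ, ‖T ^ n‖ ≤ M)
    (D B : H →L[ℂ] H)
    (hB : ∀ h : H, ‖B h‖ ^ 2 - ‖B (T h)‖ ^ 2 = ∑' n : ℕ, bt n * ‖D ((T ^ n) h)‖ ^ 2) :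
    ∀ h : H,
      (Summable fun n : ℕ => ‖D ((T ^ n) h)‖ ^ 2) ∧
      ∃ l : ℝ, Tendsto (fun N : ℕ => ‖B ((T ^ N) h)‖ ^ 2) atTop (nhds l) ∧
        ‖B h‖ ^ 2 =
          (∑' n : ℕ, (∑ j ∈ Finset.range (n + 1), bt j) * ‖D ((T ^ n) h)‖ ^ 2) + l :=
  stmt13_general bt hbt_sum hbt0 hbt_nn T M hpb D B hB
end

section
/- Let q(t) = q_0 + q_1 t + … + q_s t^s be a real polynomial all of whose roots lie in the open unit disc (so q_s ≠ 0, q(1) ≠ 0). Let a ∈ ℓ^∞ and define b_n := ∑_{j=0}^s q_j a_{n+j}. If b_n converges to b_∞, then a_n converges to b_∞ / q(1). -/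
/-!
Let `S` be the left shift on sequences, so that `b = q(S) a`. Over `ℂ` the polynomial factors as
`q = c ∏ (X - z)` with `|z| < 1`, so it suffices that each factor `S - z` transfers limits:
if `u (n + 1) - z u n → L` then `e n := u n - L / (1 - z)` satisfies `‖e (n + 1)‖ ≤ |z| ‖e n‖ + o(1)`,
which forces `e → 0` since `|z| < 1`. Composing the factors, `a → b∞ / (c ∏ (1 - z)) = b∞ / q(1)`.
-/

open Filter Finset Polynomial Topology

noncomputable def seqShift (R M : Type*) [CommSemiring R] [AddCommMonoid M] [Module R M] :
    Module.End R (ℕ → M) :=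
  LinearMap.funLeft R M (· + 1)

section Shift

variable {R M : Type*} [CommSemiring R] [AddCommMonoid M] [Module R M]

@[simp]
lemma seqShift_apply (a : ℕ → M) (n : ℕ) : seqShift R M a n = a (n + 1) := rfl

lemma seqShift_pow_apply (i : ℕ) (a : ℕ → M) (n : ℕ) : (seqShift R M ^ i) a n = a (n + i) := by
  induction i generalizing n with
  | zero => rfl
  | succ i ih =>
    rw [pow_succ', Module.End.mul_apply, seqShift_apply, ih, add_right_comm]
    rfl

lemma aeval_seqShift_apply (p : R[X]) (a : ℕ → M) (n : ℕ) :
    aeval (seqShift R M) p a n = ∑ j ∈ range (p.natDegree + 1), p.coeff j • a (n + j) := by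
  simp [aeval_eq_sum_range, LinearMap.sum_apply, Finset.sum_apply, seqShift_pow_apply]

end Shift

lemma tendsto_zero_of_le_mul_add {x v : ℕ → ℝ} {r : ℝ} (hx : ∀ n, 0 ≤ x n) (hr0 : 0 ≤ r)
    (hr : r < 1) (hv : Tendsto v atTop (𝓝 0)) (hrec : ∀ n, x (n + 1) ≤ r * x n + v n) :
    Tendsto x atTop (𝓝 0) := by
  refine tendsto_order.2 ⟨fun a ha => .of_forall fun n => ha.trans_le (hx n), fun ε hε => ?_⟩
  have hδ : 0 < ε * (1 - r) / 2 := by have := sub_pos.2 hr; positivity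
  obtain ⟨N, hN⟩ := eventually_atTop.1 (hv.eventually (gt_mem_nhds hδ))
  have hbound : ∀ k, x (N + k) ≤ r ^ k * x N + ε / 2 := by
    intro k
    induction k with
    | zero => simp only [add_zero, pow_zero, one_mul]; linarith
    | succ k ih =>
      calc x (N + (k + 1)) ≤ r * x (N + k) + v (N + k) := hrec (N + k)
        _ ≤ r * (r ^ k * x N + ε / 2) + ε * (1 - r) / 2 := by
          gcongr; exact (hN _ (Nat.le_add_right N k)).le
        _ = r ^ (k + 1) * x N + ε / 2 := by ring
  have hgeo : Tendsto (fun k => r ^ k * x N) atTop (𝓝 0) := by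
    simpa using (tendsto_pow_atTop_nhds_zero_of_lt_one hr0 hr).mul_const (x N)
  obtain ⟨K, hK⟩ := eventually_atTop.1 (hgeo.eventually (gt_mem_nhds (half_pos hε)))
  filter_upwards [eventually_ge_atTop (N + K)] with n hn
  obtain ⟨k, rfl⟩ := Nat.exists_eq_add_of_le (le_of_add_le_left hn)
  linarith [hbound k, hK k (by omega)]

lemma tendsto_div_one_sub_of_tendsto_sub_mul {𝕜 : Type*} [NormedField 𝕜] {z L : 𝕜} {c : ℕ → 𝕜}
    (hz : ‖z‖ < 1) (h : Tendsto (fun n => c (n + 1) - z * c n) atTop (𝓝 L)) :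
    Tendsto c atTop (𝓝 (L / (1 - z))) := by
  have hz1 : 1 - z ≠ 0 := sub_ne_zero.2 fun h1 => by simp [← h1] at hz
  set e : ℕ → 𝕜 := fun n => c n - L / (1 - z)
  have hrec : ∀ n, e (n + 1) = z * e n + (c (n + 1) - z * c n - L) := fun n => by
    simp only [e]; field_simp; ring
  have he : Tendsto e atTop (𝓝 0) := by
    refine tendsto_zero_iff_norm_tendsto_zero.2 <|
      tendsto_zero_of_le_mul_add (fun n => norm_nonneg _) (norm_nonneg z) hz
        (tendsto_zero_iff_norm_tendsto_zero.1 (by simpa using h.sub_const L)) fun n => ?_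
    rw [hrec, ← norm_mul]
    exact norm_add_le _ _
  simpa [e] using he.add_const (L / (1 - z))

section Transfer

variable {𝕜 : Type*} [NormedField 𝕜]

def RecoversLimit (p : 𝕜[X]) : Prop :=
  ∀ (a : ℕ → 𝕜) (L : 𝕜), Tendsto (aeval (seqShift 𝕜 𝕜) p a) atTop (𝓝 L) →
    Tendsto a atTop (𝓝 (L / p.eval 1))

lemma RecoversLimit.mul {p q : 𝕜[X]} (hp : RecoversLimit p) (hq : RecoversLimit q) :
    RecoversLimit (p * q) := fun a L h => by
  rw [eval_mul, ← div_div]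
  exact hq a _ (hp _ L (by rwa [map_mul, Module.End.mul_apply] at h))

lemma recoversLimit_C {c : 𝕜} (hc : c ≠ 0) : RecoversLimit (C c) := fun a L h => by
  rw [aeval_C, Module.algebraMap_end_apply] at h
  simpa [hc, div_eq_inv_mul] using h.const_mul c⁻¹

lemma recoversLimit_X_sub_C {z : 𝕜} (hz : ‖z‖ < 1) : RecoversLimit (X - C z) := fun a L h => by
  rw [eval_sub, eval_X, eval_C]
  refine tendsto_div_one_sub_of_tendsto_sub_mul hz (h.congr fun n => ?_)
  simp [sub_eq_add_neg]

lemma recoversLimit_of_norm_root_lt_one [IsAlgClosed 𝕜] {p : 𝕜[X]} (hp : p ≠ 0)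
    (hroots : ∀ z, p.IsRoot z → ‖z‖ < 1) : RecoversLimit p := by
  rw [← C_leadingCoeff_mul_prod_multiset_X_sub_C (IsAlgClosed.card_roots_eq_natDegree (p := p))]
  refine (recoversLimit_C (leadingCoeff_ne_zero.2 hp)).mul <|
    Multiset.prod_induction _ _ (fun _ _ => RecoversLimit.mul) (by simp [RecoversLimit]) ?_
  simp only [Multiset.mem_map, forall_exists_index, and_imp]
  rintro _ z hz rfl
  exact recoversLimit_X_sub_C (hroots z (isRoot_of_mem_roots hz))

end Transfer

theorem stmt17_general (q : Polynomial ℝ) (hq : q ≠ 0)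
    (hroots : ∀ z : ℂ, (q.map (algebraMap ℝ ℂ)).IsRoot z → ‖z‖ < 1)
    (a : ℕ → ℝ)
    (b_inf : ℝ)
    (hb : Tendsto (fun n => ∑ j ∈ Finset.range (q.natDegree + 1), q.coeff j * a (n + j))
      atTop (nhds b_inf)) :
    Tendsto a atTop (nhds (b_inf / q.eval 1)) := by
  set p := q.map (algebraMap ℝ ℂ)
  have hbC : Tendsto (aeval (seqShift ℂ ℂ) p fun n => (a n : ℂ)) atTop (𝓝 (b_inf : ℂ)) := by
    refine ((Complex.continuous_ofReal.tendsto b_inf).comp hb).congr fun n => ?_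
    rw [aeval_seqShift_apply]
    simp [p]
  have haC := recoversLimit_of_norm_root_lt_one (map_ne_zero hq) hroots _ _ hbC
  rw [eval_one_map] at haC
  simpa [Function.comp_def] using (Complex.continuous_re.tendsto _).comp haC

theorem stmt17 (q : Polynomial ℝ) (hq : q ≠ 0)
    (hroots : ∀ z : ℂ, (q.map (algebraMap ℝ ℂ)).IsRoot z → ‖z‖ < 1)
    (a : ℕ → ℝ) (Mb : ℝ) (hab : ∀ n, |a n| ≤ Mb)
    (b_inf : ℝ)
    (hb : Tendsto (fun n => ∑ j ∈ Finset.range (q.natDegree + 1), q.coeff j * a (n + j))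
      atTop (nhds b_inf)) :
    Tendsto a atTop (nhds (b_inf / q.eval 1)) :=
  stmt17_general q hq hroots a b_inf hb
end
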